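/- Assume in addition the vanishing relations of Proposition 3.8: for every arrow β, x(β)·x(g(β))·x(f(g(β))) = 0 and x(β)·x(f(β))·x(g(f(β))) = 0. Then for every arrow α ∈ Q₁: x(α)·x(f(α))·x(f²(α))·x(α) = 0 and x(α)·x(g(α))·x(g²(α))⋯x(g^{n_α−1}(α))·x(α) = 0 in A. -/

import Mathlib

/-!
Reading the Jacobian relation at `f α` with `f³ = id` gives `x(f² α) x(α) = c · x(g f α) ⋯`;
the factor `x(g f α)` is really present because the quiver has no loops, so `g` fixes no arrow
and the `g`-orbit of `f α` has length at least two. Multiplying on the left by `x(α) x(f α)`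
exhibits the vanishing product `x(α) x(f α) x(g f α)`. For the `g`-cycle, the relation at `α`
says `c(α) · x(α) x(g α) ⋯ x(g^{n_α-1} α) = x(α) x(f α) x(f² α)`, so the second product,
followed by `x(α)`, is a nonzero multiple of the first.
-/

/-- The product `x α * x (g α) * ⋯ * x (g^[m-1] α)` of `m` factors along the `g`-orbit,
read left to right (the empty product for `m = 0` is `1`). -/
def gpath {Q₁ A : Type} [Ring A] (x : Q₁ → A) (g : Q₁ → Q₁) (α : Q₁) (m : ℕ) : A :=
  ((List.range m).map fun i => x (g^[i] α)).prod

open Function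

theorem Function.Injective.one_lt_minimalPeriod {α : Type*} [Finite α] {f : α → α}
    (hf : Injective f) {a : α} (ha : f a ≠ a) : 1 < minimalPeriod f a := by
  have hpos := minimalPeriod_pos_of_mem_periodicPts (hf.mem_periodicPts a)
  have hne : minimalPeriod f a ≠ 1 := mt minimalPeriod_eq_one_iff_isFixedPt.mp ha
  omega

section GPath

variable {Q₁ A : Type} [Ring A] (x : Q₁ → A) (g : Q₁ → Q₁)

theorem gpath_succ (α : Q₁) (m : ℕ) : gpath x g α (m + 1) = x α * gpath x g (g α) m := by
  simp [gpath, List.range_succ_eq_map, Function.comp_def, Function.iterate_succ_apply]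

theorem gpath_eq_mul_of_pos (α : Q₁) {m : ℕ} (hm : 0 < m) :
    gpath x g α m = x α * gpath x g (g α) (m - 1) := by
  obtain ⟨k, rfl⟩ := Nat.exists_eq_add_of_lt hm
  simpa using gpath_succ x g α k

end GPath

section JacobianRelations

variable {Q₁ K A : Type} [Finite Q₁] [Field K] [Ring A] [Algebra K A]
  {f g : Q₁ ≃ Q₁} {c : Q₁ → K} {x : Q₁ → A}

theorem mul_mul_mul_self_eq_zero_of_vanishing (hf3 : ∀ α, f (f (f α)) = α)
    (hg : ∀ α, g α ≠ α)
    (hrel : ∀ α, x (f α) * x (f (f α)) = c α • gpath x g (g α) (minimalPeriod g α - 1))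
    (hvan : ∀ β, x β * x (f β) * x (g (f β)) = 0) (α : Q₁) :
    x α * x (f α) * x (f (f α)) * x α = 0 := by
  have hlen : 0 < minimalPeriod g (f α) - 1 := by
    have := g.injective.one_lt_minimalPeriod (hg (f α))
    omega
  have hrel' : x (f (f α)) * x α =
      c (f α) • (x (g (f α)) * gpath x g (g (g (f α))) (minimalPeriod g (f α) - 1 - 1)) := by
    rw [← gpath_eq_mul_of_pos x g _ hlen, ← hrel, hf3]
  rw [mul_assoc, hrel', mul_smul_comm, ← mul_assoc, hvan, zero_mul, smul_zero]

theorem smul_gpath_minimalPeriod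
    (hrel : ∀ α, x (f α) * x (f (f α)) = c α • gpath x g (g α) (minimalPeriod g α - 1))
    (α : Q₁) : c α • gpath x g α (minimalPeriod g α) = x α * x (f α) * x (f (f α)) := by
  rw [gpath_eq_mul_of_pos x g α (minimalPeriod_pos_of_mem_periodicPts
    (g.injective.mem_periodicPts α)), mul_assoc, hrel, mul_smul_comm]

theorem gpath_minimalPeriod_mul_self_eq_zero
    (hrel : ∀ α, x (f α) * x (f (f α)) = c α • gpath x g (g α) (minimalPeriod g α - 1))
    {α : Q₁} (hc : c α ≠ 0) (h : x α * x (f α) * x (f (f α)) * x α = 0) :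
    gpath x g α (minimalPeriod g α) * x α = 0 := by
  have : c α • (gpath x g α (minimalPeriod g α) * x α) = 0 := by
    rw [← smul_mul_assoc, smul_gpath_minimalPeriod hrel, h]
  exact (smul_eq_zero.mp this).resolve_left hc

end JacobianRelations

theorem stmt_16_general
  {Q₀ Q₁ : Type} [Fintype Q₁]
  (s t : Q₁ → Q₀)
  (hnoloop : ∀ e : Q₁, s e ≠ t e)
  (f g : Q₁ ≃ Q₁)
  (hsg : ∀ α : Q₁, s (g α) = t α)
  (hf3 : ∀ α : Q₁, f (f (f α)) = α)
  {K : Type} [Field K] {A : Type} [Ring A] [Algebra K A]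
  (c : Q₁ → K) (hc0 : ∀ α : Q₁, c α ≠ 0)
  (x : Q₁ → A)
  (hrel : ∀ α : Q₁, x (f α) * x (f (f α)) =
      c α • gpath x (⇑g) (g α) (Function.minimalPeriod (⇑g) α - 1))
  (hvan : ∀ β : Q₁, x β * x (g β) * x (f (g β)) = 0 ∧ x β * x (f β) * x (g (f β)) = 0) :
    ∀ α : Q₁, x α * x (f α) * x (f (f α)) * x α = 0 ∧
      gpath x (⇑g) α (Function.minimalPeriod (⇑g) α) * x α = 0 := by
  intro α
  have hg : ∀ β, g β ≠ β := fun β h => hnoloop β (by rw [← hsg β, h])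
  have hf : x α * x (f α) * x (f (f α)) * x α = 0 :=
    mul_mul_mul_self_eq_zero_of_vanishing hf3 hg hrel (fun β => (hvan β).2) α
  exact ⟨hf, gpath_minimalPeriod_mul_self_eq_zero hrel (hc0 α) hf⟩

theorem stmt_16
  {Q₀ Q₁ : Type} [Fintype Q₀] [Fintype Q₁] [DecidableEq Q₀] [DecidableEq Q₁]
  [Nonempty Q₀] [Nonempty Q₁]
  (s t : Q₁ → Q₀)
  (hconn : ∀ u v : Q₀, Relation.EqvGen (fun a b => ∃ e : Q₁, s e = a ∧ t e = b) u v)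
  (hnoloop : ∀ e : Q₁, s e ≠ t e)
  (hno2cyc : ∀ e e' : Q₁, ¬ (s e = t e' ∧ t e = s e'))
  (hout : ∀ v : Q₀, (Finset.univ.filter fun e => s e = v).card = 2)
  (hin : ∀ v : Q₀, (Finset.univ.filter fun e => t e = v).card = 2)
  (f g : Q₁ ≃ Q₁)
  (hfg : ∀ α : Q₁, f α ≠ g α)
  (hsf : ∀ α : Q₁, s (f α) = t α)
  (hsg : ∀ α : Q₁, s (g α) = t α)
  (hf3 : ∀ α : Q₁, f (f (f α)) = α)
  (bar : Q₁ → Q₁)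
  (hbar_ne : ∀ α : Q₁, bar α ≠ α)
  (hbar_s : ∀ α : Q₁, s (bar α) = s α)
  {K : Type} [Field K] {A : Type} [Ring A] [Algebra K A]
  (c : Q₁ → K) (hc0 : ∀ α : Q₁, c α ≠ 0) (hcg : ∀ α : Q₁, c (g α) = c α)
  (x : Q₁ → A)
  (hrel : ∀ α : Q₁, x (f α) * x (f (f α)) =
      c α • gpath x (⇑g) (g α) (Function.minimalPeriod (⇑g) α - 1))
  (hvan : ∀ β : Q₁, x β * x (g β) * x (f (g β)) = 0 ∧ x β * x (f β) * x (g (f β)) = 0) :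
    ∀ α : Q₁, x α * x (f α) * x (f (f α)) * x α = 0 ∧
      gpath x (⇑g) α (Function.minimalPeriod (⇑g) α) * x α = 0 :=
  stmt_16_general s t hnoloop f g hsg hf3 c hc0 x hrel hvan
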